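/- Two words α, β ∈ FM(Z) (Y-sequences) are Peiffer equivalent if and only if σ(α) ~_𝔘 σ(β) in Υ. -/

import Mathlib

universe u

namespace Wh

variable {X : Type u}

/-- The set of symbols `(ᵘr)^ε` for a presentation with relators `rels`:
`u` is a word of the free group, `r` a relator and `eps` the sign (`true` for `+1`). -/
structure Sym (X : Type u) (rels : Set (FreeGroup X)) where
  u : FreeGroup X
  r : rels
  eps : Bool

variable {rels : Set (FreeGroup X)}

/-- The formal inverse `(ᵘr)^{-ε}` of a symbol `(ᵘr)^ε`. -/
def Sym.symInv (a : Sym X rels) : Sym X rels := ⟨a.u, a.r, !a.eps⟩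

/-- `θ((ᵘr)^ε) = u r^ε u⁻¹`. -/
def Sym.theta (a : Sym X rels) : FreeGroup X :=
  a.u * (if a.eps then (a.r : FreeGroup X) else (a.r : FreeGroup X)⁻¹) * a.u⁻¹

/-- The conjugate `ᵛ((ᵘr)^ε) = (^{vu}r)^ε`. -/
def Sym.conj (v : FreeGroup X) (a : Sym X rels) : Sym X rels := ⟨v * a.u, a.r, a.eps⟩

/-- The defining relations of the monoid `Υ` : `a ⬝ b = (^{θ(a)}b) ⬝ a`. -/
def upsRel (rels : Set (FreeGroup X)) :
    FreeMonoid (Sym X rels) → FreeMonoid (Sym X rels) → Prop := fun x y =>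
  ∃ a b : Sym X rels, x = FreeMonoid.of a * FreeMonoid.of b ∧
    y = FreeMonoid.of (Sym.conj (Sym.theta a) b) * FreeMonoid.of a

/-- The congruence on the free monoid on `Z` generated by the defining relations of `Υ`. -/
def upsCon (rels : Set (FreeGroup X)) : Con (FreeMonoid (Sym X rels)) := conGen (upsRel rels)

/-- The monoid `Υ` presented on `Z` by the relations `a ⬝ b = (^{θ(a)}b) ⬝ a`. -/
abbrev Ups (rels : Set (FreeGroup X)) := (upsCon rels).Quotient

/-- The canonical epimorphism `σ : FM(Z) → Υ`. -/
def sigma (rels : Set (FreeGroup X)) : FreeMonoid (Sym X rels) →* Ups rels := (upsCon rels).mk'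

/-- The submonoid `𝔘` of `Υ` generated by the elements `σ(a)σ(a⁻¹)`, `a ∈ Z`. -/
def UU (rels : Set (FreeGroup X)) : Submonoid (Ups rels) :=
  Submonoid.closure
    {x | ∃ a : Sym X rels, x = sigma rels (FreeMonoid.of a * FreeMonoid.of a.symInv)}

/-- The monoid homomorphism `θ̄ : Υ → F` induced by `θ`. -/
def thetaBar (rels : Set (FreeGroup X)) : Ups rels →* FreeGroup X :=
  (upsCon rels).lift (FreeMonoid.lift Sym.theta) (by
    refine Con.conGen_le.2 fun x y h => ?_
    obtain ⟨a, b, rfl, rfl⟩ := h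
    simp only [Con.ker_rel, map_mul, FreeMonoid.lift_eval_of]
    simp only [Sym.theta, Sym.conj]
    group)

/-- The relators of the group `𝒢(Υ)` : `a ⬝ b ⬝ ι((^{θ(a)}b) ⬝ a)`. -/
def grels (rels : Set (FreeGroup X)) : Set (FreeGroup (Sym X rels)) :=
  {x | ∃ a b : Sym X rels, x = FreeGroup.of a * FreeGroup.of b *
      (FreeGroup.of (Sym.conj (Sym.theta a) b) * FreeGroup.of a)⁻¹}

/-- The universal enveloping group `𝒢(Υ)`. -/
abbrev GUps (rels : Set (FreeGroup X)) := PresentedGroup (grels rels)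

/-- The canonical monoid homomorphism `μ : Υ → 𝒢(Υ)`. -/
def mu (rels : Set (FreeGroup X)) : Ups rels →* GUps rels :=
  (upsCon rels).lift (FreeMonoid.lift fun a => (PresentedGroup.of a : GUps rels)) (by
    refine Con.conGen_le.2 fun x y h => ?_
    obtain ⟨a, b, rfl, rfl⟩ := h
    simp only [Con.ker_rel, map_mul, FreeMonoid.lift_eval_of]
    have h2 : (QuotientGroup.mk (FreeGroup.of a * FreeGroup.of b *
        (FreeGroup.of (Sym.conj (Sym.theta a) b) * FreeGroup.of a)⁻¹) : GUps rels) = 1 :=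
      (QuotientGroup.eq_one_iff _).2 (Subgroup.subset_normalClosure ⟨a, b, rfl⟩)
    rw [QuotientGroup.mk_mul, QuotientGroup.mk_inv, QuotientGroup.mk_mul,
      QuotientGroup.mk_mul, mul_inv_eq_one] at h2
    exact h2)

/-- The subgroup `𝔘̂` of `𝒢(Υ)` generated by `μ(𝔘)`. -/
def UUhat (rels : Set (FreeGroup X)) : Subgroup (GUps rels) :=
  Subgroup.closure (mu rels '' (UU rels : Set (Ups rels)))

/-- The group homomorphism `θ̃ : 𝒢(Υ) → F` induced by `θ`. -/
def thetaTilde (rels : Set (FreeGroup X)) : GUps rels →* FreeGroup X :=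
  PresentedGroup.toGroup (f := Sym.theta) (by
    rintro x ⟨a, b, rfl⟩
    simp only [map_mul, map_inv, FreeGroup.lift_apply_of]
    simp only [Sym.theta, Sym.conj]
    group)

/-- Peiffer equivalence `~_𝔘` on `Υ` : the equivalence relation generated by the pairs
`(x, x ⬝ σ(a)σ(a⁻¹))`. -/
def peifferEquiv (rels : Set (FreeGroup X)) : Ups rels → Ups rels → Prop :=
  Relation.EqvGen fun x y => ∃ a : Sym X rels,
    y = x * sigma rels (FreeMonoid.of a * FreeMonoid.of a.symInv)

/-- The weak dominion of a submonoid `U` of a monoid `S`. -/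
def WDom (S : Type u) [Monoid S] (U : Submonoid S) : Set S :=
  {d | ∀ (G : Type u) [Group G] (f g : S →* G), (∀ u ∈ U, f u = g u) → f d = g d}

/-- The `F`-action on `𝒢(Υ)` determined by `ʷ(μσ(a)) = μσ(ʷa)`. -/
def actF (rels : Set (FreeGroup X)) (w : FreeGroup X) : GUps rels →* GUps rels :=
  PresentedGroup.toGroup (f := fun a => (PresentedGroup.of (Sym.conj w a) : GUps rels)) (by
    rintro x ⟨a, b, rfl⟩
    simp only [map_mul, map_inv, FreeGroup.lift_apply_of]
    have key : Sym.conj w (Sym.conj (Sym.theta a) b) =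
        Sym.conj (Sym.theta (Sym.conj w a)) (Sym.conj w b) := by
      unfold Sym.conj Sym.theta; split <;> simp [mul_assoc]
    rw [key]
    have h2 : (QuotientGroup.mk (FreeGroup.of (Sym.conj w a) * FreeGroup.of (Sym.conj w b) *
        (FreeGroup.of (Sym.conj (Sym.theta (Sym.conj w a)) (Sym.conj w b)) *
          FreeGroup.of (Sym.conj w a))⁻¹) : GUps rels) = 1 :=
      (QuotientGroup.eq_one_iff _).2 (Subgroup.subset_normalClosure ⟨_, _, rfl⟩)
    rw [QuotientGroup.mk_mul, QuotientGroup.mk_inv, QuotientGroup.mk_mul,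
      QuotientGroup.mk_mul] at h2
    exact h2)


/-- One elementary Peiffer operation on `Y`-sequences (words over `Z`): an elementary
Peiffer exchange in either direction, or a Peiffer deletion. -/
def peifferStep (rels : Set (FreeGroup X)) :
    FreeMonoid (Sym X rels) → FreeMonoid (Sym X rels) → Prop := fun x y =>
  (∃ (w₁ w₂ : FreeMonoid (Sym X rels)) (a b : Sym X rels),
      x = w₁ * FreeMonoid.of a * FreeMonoid.of b * w₂ ∧
      y = w₁ * FreeMonoid.of (Sym.conj (Sym.theta a) b) * FreeMonoid.of a * w₂) ∨
  (∃ (w₁ w₂ : FreeMonoid (Sym X rels)) (a b : Sym X rels),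
      x = w₁ * FreeMonoid.of a * FreeMonoid.of b * w₂ ∧
      y = w₁ * FreeMonoid.of b * FreeMonoid.of (Sym.conj (Sym.theta b)⁻¹ a) * w₂) ∨
  (∃ (w₁ w₂ : FreeMonoid (Sym X rels)) (a : Sym X rels),
      x = w₁ * FreeMonoid.of a * FreeMonoid.of a.symInv * w₂ ∧ y = w₁ * w₂)

/-- Peiffer equivalence of `Y`-sequences: the equivalence relation on `FM(Z)` generated
by the elementary Peiffer operations (exchanges, deletions and insertions). -/
def wordPeifferEquiv (rels : Set (FreeGroup X)) :
    FreeMonoid (Sym X rels) → FreeMonoid (Sym X rels) → Prop :=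
  Relation.EqvGen (peifferStep rels)


/-!
Exchanges do not change the image of a word under `σ`, and since `σ(a)σ(a⁻¹)` is central in `Υ`
(two exchanges carry it past any generator), deleting `a a⁻¹` anywhere in a word turns its image
`x ⬝ σ(a)σ(a⁻¹)` into `x`. Conversely, Peiffer equivalence of words is a congruence on
`FM(Z)` that contains the defining relations of `Υ` and identifies every `a a⁻¹` with `1`; the
induced map from `Υ` to its quotient monoid therefore collapses `~_𝔘`.
-/

namespace Sym

lemma conj_conj (v w : FreeGroup X) (a : Sym X rels) : conj v (conj w a) = conj (v * w) a := by
  simp [conj, mul_assoc]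

lemma conj_one (a : Sym X rels) : conj 1 a = a := by
  simp [conj]

lemma theta_mul_theta_symInv (a : Sym X rels) : a.theta * a.symInv.theta = 1 := by
  obtain ⟨_, _, _ | _⟩ := a <;> simp [theta, symInv]

end Sym

open FreeMonoid Relation Function

local notation "σ" => sigma _

lemma sigma_of_mul_sigma_of (a b : Sym X rels) :
    σ (of a) * σ (of b) = σ (of (Sym.conj a.theta b)) * σ (of a) := by
  simp only [← map_mul]
  exact (upsCon rels).eq.2 <| ConGen.Rel.of _ _ ⟨a, b, rfl, rfl⟩

lemma sigma_of_mul_sigma_of_conj_inv (a b : Sym X rels) :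
    σ (of b) * σ (of (Sym.conj b.theta⁻¹ a)) = σ (of a) * σ (of b) := by
  rw [sigma_of_mul_sigma_of, Sym.conj_conj, mul_inv_cancel, Sym.conj_one]

lemma commute_sigma_of_mul_symInv (a : Sym X rels) (w : FreeMonoid (Sym X rels)) :
    Commute (σ (of a * of a.symInv)) (σ w) := by
  induction w using FreeMonoid.inductionOn' with
  | one => exact Commute.one_right _
  | of_mul b w ih =>
    rw [map_mul _ (of b) w]
    refine Commute.mul_right ?_ ih
    calc σ (of a * of a.symInv) * σ (of b)
        = σ (of a) * σ (of (Sym.conj a.symInv.theta b)) * σ (of a.symInv) := by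
          rw [map_mul, mul_assoc, sigma_of_mul_sigma_of a.symInv, mul_assoc]
      _ = σ (of b) * σ (of a * of a.symInv) := by
          rw [sigma_of_mul_sigma_of, Sym.conj_conj, Sym.theta_mul_theta_symInv, Sym.conj_one,
            map_mul, mul_assoc]

lemma peifferEquiv_sigma_of_peifferStep {x y : FreeMonoid (Sym X rels)}
    (h : peifferStep rels x y) : peifferEquiv rels (σ x) (σ y) := by
  rcases h with ⟨w₁, w₂, a, b, rfl, rfl⟩ | ⟨w₁, w₂, a, b, rfl, rfl⟩ | ⟨w₁, w₂, a, rfl, rfl⟩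
  · simp only [map_mul]
    rw [mul_assoc (σ w₁), sigma_of_mul_sigma_of, ← mul_assoc]
    exact EqvGen.refl _
  · simp only [map_mul]
    rw [mul_assoc (σ w₁) (σ (of b)), sigma_of_mul_sigma_of_conj_inv, ← mul_assoc]
    exact EqvGen.refl _
  · refine EqvGen.symm _ _ (EqvGen.rel _ _ ⟨a, ?_⟩)
    rw [mul_assoc w₁, map_mul, map_mul, (commute_sigma_of_mul_symInv a w₂).right_comm, ← map_mul]

instance : IsEquiv (Ups rels) (peifferEquiv rels) := inferInstanceAs (IsEquiv _ (EqvGen _))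

instance : IsEquiv (FreeMonoid (Sym X rels)) (wordPeifferEquiv rels) :=
  inferInstanceAs (IsEquiv _ (EqvGen _))

lemma peifferStep_mul_mul (c d : FreeMonoid (Sym X rels)) {x y : FreeMonoid (Sym X rels)}
    (h : peifferStep rels x y) : peifferStep rels (c * x * d) (c * y * d) := by
  rcases h with ⟨w₁, w₂, a, b, rfl, rfl⟩ | ⟨w₁, w₂, a, b, rfl, rfl⟩ | ⟨w₁, w₂, a, rfl, rfl⟩
  · exact .inl ⟨c * w₁, w₂ * d, a, b, by simp only [mul_assoc], by simp only [mul_assoc]⟩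
  · exact .inr <| .inl ⟨c * w₁, w₂ * d, a, b, by simp only [mul_assoc], by simp only [mul_assoc]⟩
  · exact .inr <| .inr ⟨c * w₁, w₂ * d, a, by simp only [mul_assoc], by simp only [mul_assoc]⟩

lemma wordPeifferEquiv_mul_mul (c d : FreeMonoid (Sym X rels)) {x y : FreeMonoid (Sym X rels)}
    (h : wordPeifferEquiv rels x y) : wordPeifferEquiv rels (c * x * d) (c * y * d) :=
  EqvGen.eqvGen_le (r' := wordPeifferEquiv rels on (c * · * d))
    (fun _ _ h => EqvGen.rel _ _ (peifferStep_mul_mul c d h)) _ _ h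

def peifferCon (rels : Set (FreeGroup X)) : Con (FreeMonoid (Sym X rels)) where
  r := wordPeifferEquiv rels
  iseqv := EqvGen.is_equivalence _
  mul' {w x y z} hwx hyz := by
    have hwx' : wordPeifferEquiv rels (w * y) (x * y) := by
      simpa using wordPeifferEquiv_mul_mul 1 y hwx
    have hyz' : wordPeifferEquiv rels (x * y) (x * z) := by
      simpa using wordPeifferEquiv_mul_mul x 1 hyz
    exact EqvGen.trans _ _ _ hwx' hyz'

lemma upsCon_le_peifferCon : upsCon rels ≤ peifferCon rels :=
  Con.conGen_le.2 fun _ _ ⟨a, b, hx, hy⟩ =>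
    EqvGen.rel _ _ <| .inl ⟨1, 1, a, b, by simp [hx], by simp [hy]⟩

lemma peifferCon_of_mul_symInv (a : Sym X rels) : peifferCon rels (of a * of a.symInv) 1 :=
  EqvGen.rel _ _ <| .inr <| .inr ⟨1, 1, a, by simp, by simp⟩

lemma map_peifferCon_sigma (w : FreeMonoid (Sym X rels)) :
    (upsCon rels).map (peifferCon rels) upsCon_le_peifferCon (σ w) = w :=
  rfl

lemma map_peifferCon_eq_of_peifferEquiv {x y : Ups rels} (h : peifferEquiv rels x y) :
    (upsCon rels).map (peifferCon rels) upsCon_le_peifferCon x =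
      (upsCon rels).map (peifferCon rels) upsCon_le_peifferCon y := by
  refine EqvGen.eqvGen_le (r' := (· = ·) on _) (fun x y ⟨a, hy⟩ => ?_) x y h
  rw [onFun, hy, map_mul, map_peifferCon_sigma, (peifferCon rels).eq.2 (peifferCon_of_mul_symInv a),
    Con.coe_one, mul_one]

/-- Two `Y`-sequences `α, β` are Peiffer equivalent in the usual sense if and only if
`σ(α) ~_𝔘 σ(β)` in `Υ`. -/
theorem wordPeifferEquiv_iff (rels : Set (FreeGroup X))
    (α β : FreeMonoid (Sym X rels)) :
    wordPeifferEquiv rels α β ↔ peifferEquiv rels (sigma rels α) (sigma rels β) := by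
  refine ⟨EqvGen.eqvGen_le (r' := peifferEquiv rels on sigma rels)
    (fun _ _ => peifferEquiv_sigma_of_peifferStep) α β, fun h => ?_⟩
  exact (peifferCon rels).eq.1 (map_peifferCon_eq_of_peifferEquiv h)

end Wh
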